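/- arXiv:1309.6060 — 7 statements merged into one kernel-verified Lean document; each statement's English description precedes it below -/
import Mathlib

section
/- Let s ⊂ gl_n(F) be a Cartan subalgebra, let x ∈ ℚ^n, let E = k((u)) with u^e = z be a finite extension of F over which s splits, and let g ∈ GL_n(E) satisfy g^{-1}·s(E)·g = t(E), where s(E) is the E-span of s and t(E) the diagonal matrices over E. Then (τ + ad(x̃))(s) ⊆ s if and only if g^{-1}·x̃·g + g^{-1}·τ(g) ∈ t(E). -/
noncomputable section

open Polynomial Matrix

attribute [local instance 100] LieRing.ofAssociativeRing

variable {k : Type*} [Field k]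

/-- The derivation `τ = z·d/dz` on `k((z))`, acting coefficientwise by `n`. -/
def tauF (f : LaurentSeries k) : LaurentSeries k :=
  ⟨fun n => (n : k) * f.coeff n,
    f.isPWO_support'.mono (fun n hn => by
      simp only [Function.mem_support, ne_eq] at hn ⊢
      exact fun h => hn (by rw [h, mul_zero]))⟩

/-- The derivation `τ = (1/e)·u·d/du` on `E = k((u))` (where `u^e = z`),
acting coefficientwise by `n/e`. -/
def tauU (e : ℕ) (f : LaurentSeries k) : LaurentSeries k :=
  ⟨fun n => ((n : k) / (e : k)) * f.coeff n,
    f.isPWO_support'.mono (fun n hn => by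
      simp only [Function.mem_support, ne_eq] at hn ⊢
      exact fun h => hn (by rw [h, mul_zero]))⟩

/-- For `x ∈ ℚ^n`, the constant diagonal matrix `x̃ = diag(x₁, …, xₙ)`. -/
def diagQ {n : ℕ} (x : Fin n → ℚ) : Matrix (Fin n) (Fin n) (LaurentSeries k) :=
  Matrix.diagonal fun i => HahnSeries.C ((x i : k))

/-- A Cartan subalgebra of `gl_n(F)`: a commutative, self-normalizing Lie subalgebra. -/
def IsCartanLS {n : ℕ} (s : LieSubalgebra (LaurentSeries k)
    (Matrix (Fin n) (Fin n) (LaurentSeries k))) : Prop :=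
  (∀ a ∈ s, ∀ b ∈ s, a * b = b * a) ∧ s.normalizer = s

/-- The inclusion `F = k((z)) →+* E = k((u))`, `z ↦ u^e`. -/
def zmap (e : ℕ) (he : 0 < e) : LaurentSeries k →+* LaurentSeries k :=
  HahnSeries.embDomainRingHom (AddMonoidHom.mk' (fun m : ℤ => (e : ℤ) * m) (by intro a b; ring))
    (fun a b hab => by
      have : (e : ℤ) ≠ 0 := by exact_mod_cast he.ne'
      exact mul_left_cancel₀ this hab)
    (fun a b => by
      constructor
      · intro h
        exact le_of_mul_le_mul_left h (by exact_mod_cast he)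
      · intro h
        exact mul_le_mul_of_nonneg_left h (by positivity))

/-- The set `t(E)` of diagonal matrices. -/
def diagSet (n : ℕ) : Set (Matrix (Fin n) (Fin n) (LaurentSeries k)) :=
  {A | ∀ i j, i ≠ j → A i j = 0}

/-!
Write `D = τ + ad x̃`. Since `z ↦ u^e` intertwines the two derivations `τ` and fixes `x̃`,
`D(s) ⊆ s` iff `D` preserves the `E`-span `s(E)`: one direction because
`D(c • A) = τ(c) • A + c • D(A)`, the other because keeping the coefficients at multiples of `e`
is an `F`-linear retraction `E → F`, which lets one descend from `s(E)` back to `s`.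
Conjugation by `g` turns `D` into `τ + ad Y` with `Y = g⁻¹x̃g + g⁻¹τ(g)` and `s(E)` into `t(E)`,
and `τ + ad Y` preserves the diagonal matrices iff `Y` is diagonal (test it on the diagonal
matrix units).
-/

theorem Function.Semiconj.mapsTo_image_iff {α β : Type*} {f : α → β} {fa : α → α}
    {fb : β → β} (h : Function.Semiconj f fa fb) (hf : Function.Injective f) {s : Set α} :
    Set.MapsTo fb (f '' s) (f '' s) ↔ Set.MapsTo fa s s :=
  ⟨fun hb => by simpa only [Set.preimage_image_eq _ hf] using h.mapsTo_preimage hb,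
    h.mapsTo_image⟩

lemma leibniz_conj_eq {A : Type*} [Ring A] (D : A → A)
    (hD : ∀ a b, D (a * b) = D a * b + a * D b) {g h : A} (hgh : g * h = 1) (hhg : h * g = 1)
    (m : A) :
    h * D m * g = D (h * m * g) + h * D g * (h * m * g) - h * m * g * (h * D g) := by
  have hD1 : D 1 = 0 := by simpa using hD 1 1
  have hDh : D h = -(h * D g * h) := by
    have hsum : D h * g + h * D g = 0 := by rw [← hD, hhg, hD1]
    calc D h = D h * (g * h) := by rw [hgh, mul_one]
      _ = (D h * g + h * D g) * h - h * D g * h := by noncomm_ring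
      _ = -(h * D g * h) := by rw [hsum]; noncomm_ring
  have hcancel : h * m * g * (h * D g) = h * m * D g := by
    rw [mul_assoc (h * m), ← mul_assoc g, hgh, one_mul]
  rw [hD, hD, hDh, hcancel]
  noncomm_ring

lemma Submodule.mapsTo_span_of_leibniz {E V : Type*} [Semiring E] [AddCommMonoid V] [Module E V]
    {δ : E → E} {D : V → V} (hadd : ∀ v w, D (v + w) = D v + D w)
    (hsmul : ∀ (c : E) v, D (c • v) = δ c • v + c • D v) {S : Set V}
    (hS : Set.MapsTo D S (Submodule.span E S)) :
    Set.MapsTo D (Submodule.span E S) (Submodule.span E S) := by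
  intro v hv
  induction hv using Submodule.span_induction with
  | mem v hv => exact hS hv
  | zero => rw [show D 0 = 0 by simpa using hsmul 0 0]; exact zero_mem _
  | add v w _ _ hv hw => rw [hadd]; exact add_mem hv hw
  | smul c v hv' hv => rw [hsmul]; exact add_mem (smul_mem _ _ hv') (smul_mem _ _ hv)

namespace Matrix

variable {ι m n R S F E : Type*} [Fintype ι]

/-- `τ + ad X`, with `τ = d` applied entrywise. -/
def derivAd [Ring R] (d : R → R) (X A : Matrix ι ι R) : Matrix ι ι R :=
  A.map d + X * A - A * X

lemma map_mul_of_leibniz [NonUnitalNonAssocSemiring R] (d : R →+ R)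
    (hd : ∀ a b, d (a * b) = d a * b + a * d b) (A B : Matrix ι ι R) :
    (A * B).map d = A.map d * B + A * B.map d := by
  ext i j
  simp only [map_apply, add_apply, mul_apply, map_sum, hd, Finset.sum_add_distrib]

lemma conj_derivAd [DecidableEq ι] [Ring R] (d : R →+ R)
    (hd : ∀ a b, d (a * b) = d a * b + a * d b)
    (X : Matrix ι ι R) {g h : Matrix ι ι R} (hgh : g * h = 1) (hhg : h * g = 1)
    (m : Matrix ι ι R) :
    h * derivAd d X m * g = derivAd d (h * X * g + h * g.map d) (h * m * g) := by
  have hconj := leibniz_conj_eq (·.map d) (map_mul_of_leibniz d hd) hgh hhg m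
  have hX : h * X * g * (h * m * g) = h * (X * m) * g := by
    simp only [mul_assoc, ← mul_assoc g h, hgh, one_mul]
  have hX' : h * m * g * (h * X * g) = h * (m * X) * g := by
    simp only [mul_assoc, ← mul_assoc g h, hgh, one_mul]
  simp only [derivAd, mul_sub, sub_mul, mul_add, add_mul, hconj, hX, hX']
  abel

lemma derivAd_add [Ring R] (d : R →+ R) (X A B : Matrix ι ι R) :
    derivAd d X (A + B) = derivAd d X A + derivAd d X B := by
  simp only [derivAd, Matrix.map_add d (map_add d), mul_add, add_mul]
  abel

lemma derivAd_smul [CommRing R] (d : R →+ R) (hd : ∀ a b, d (a * b) = d a * b + a * d b)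
    (X : Matrix ι ι R) (c : R) (A : Matrix ι ι R) :
    derivAd d X (c • A) = d c • A + c • derivAd d X A := by
  ext i j
  simp only [derivAd, map_apply, smul_apply, add_apply, sub_apply, Matrix.mul_smul, smul_mul,
    smul_eq_mul, hd]
  ring

lemma map_derivAd [DecidableEq ι] [Ring R] [Ring S] (φ : R →+* S) {dR : R → R} {dS : S → S}
    (hφ : ∀ a, φ (dR a) = dS (φ a)) (X A : Matrix ι ι R) :
    (derivAd dR X A).map φ = derivAd dS (X.map φ) (A.map φ) := by
  change φ.mapMatrix (derivAd dR X A) = _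
  simp only [derivAd, map_sub, map_add, map_mul]
  congr 2
  ext i j
  exact hφ (A i j)

lemma mapsTo_derivAd_isDiag_iff [DecidableEq ι] [CommRing R] {d : R → R} (hd : d 0 = 0)
    (Y : Matrix ι ι R) :
    Set.MapsTo (derivAd d Y) {A | A.IsDiag} {A | A.IsDiag} ↔ Y.IsDiag := by
  constructor
  · intro hY i j hij
    have h := hY (isDiag_diagonal (Pi.single j 1)) hij
    simpa [derivAd, diagonal_apply_ne _ hij, hd, hij] using h
  · intro hY A hA
    have hcomm : Y * A = A * Y := by
      rw [← hY.diagonal_diag, ← hA.diagonal_diag]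
      exact commute_diagonal _ _
    show (derivAd d Y A).IsDiag
    simpa only [derivAd, hcomm, add_sub_cancel_right] using hA.map hd

lemma mem_of_map_mem_span [CommRing F] [CommRing E] (φ : F →+* E) (π : E →+ F)
    (hπ : ∀ f c, π (φ f * c) = f * π c) (hπ1 : π 1 = 1) (s : Submodule F (Matrix m n F))
    {w : Matrix m n F}
    (hw : w.map φ ∈ Submodule.span E ((fun A => A.map φ) '' (s : Set (Matrix m n F)))) :
    w ∈ s := by
  have hπφ : ∀ f, π (φ f) = f := fun f => by simpa [hπ1] using hπ f 1
  -- `π` does not preserve the `E`-span, but it sends `c • A.map φ` to `π c • A`.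
  suffices key : ∀ v ∈ Submodule.span E ((fun A => A.map φ) '' (s : Set (Matrix m n F))),
      ∀ c : E, (c • v).map π ∈ s by
    simpa [Matrix.map_map, Function.comp_def, hπφ] using key _ hw 1
  intro v hv
  induction hv using Submodule.span_induction with
  | mem _ ha =>
    obtain ⟨a, ha, rfl⟩ := ha
    intro c
    convert s.smul_mem (π c) ha using 1
    ext i j
    simp [mul_comm c, hπ, mul_comm (a i j)]
  | zero => intro c; simp
  | add v w _ _ hv hw =>
    intro c
    rw [smul_add, Matrix.map_add π (map_add π)]
    exact s.add_mem (hv c) (hw c)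
  | smul d v _ hv => intro c; simpa [smul_smul] using hv (c * d)

lemma mapsTo_derivAd_iff_mapsTo_span [DecidableEq ι] [CommRing F] [CommRing E] (φ : F →+* E)
    (π : E →+ F) (hπ : ∀ f c, π (φ f * c) = f * π c) (hπ1 : π 1 = 1) {dF : F → F}
    (dE : E →+ E) (hdE : ∀ a b, dE (a * b) = dE a * b + a * dE b) (hφ : ∀ a, φ (dF a) = dE (φ a))
    (X : Matrix ι ι F) (s : Submodule F (Matrix ι ι F)) :
    Set.MapsTo (derivAd dF X) s s ↔
      Set.MapsTo (derivAd dE (X.map φ))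
        (Submodule.span E ((fun A : Matrix ι ι F => A.map φ) '' s))
        (Submodule.span E ((fun A : Matrix ι ι F => A.map φ) '' s)) := by
  constructor
  · intro hs
    refine Submodule.mapsTo_span_of_leibniz (derivAd_add dE _) (derivAd_smul dE hdE _) ?_
    rintro _ ⟨a, ha, rfl⟩
    rw [← map_derivAd φ hφ]
    exact Submodule.subset_span ⟨_, hs ha, rfl⟩
  · intro hspan a ha
    refine mem_of_map_mem_span φ π hπ hπ1 s ?_
    rw [map_derivAd φ hφ]
    exact hspan (Submodule.subset_span ⟨a, ha, rfl⟩)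

end Matrix

namespace LaurentSeries

@[simp] lemma tauU_coeff (e : ℕ) (f : LaurentSeries k) (m : ℤ) :
    (tauU e f).coeff m = (m / e : k) * f.coeff m := rfl

lemma support_tauU_subset (e : ℕ) (f : LaurentSeries k) : (tauU e f).support ⊆ f.support :=
  fun m hm h => hm (by rw [tauU_coeff, h, mul_zero])

def tauUHom (e : ℕ) : LaurentSeries k →+ LaurentSeries k where
  toFun := tauU e
  map_zero' := by ext; simp
  map_add' f g := by ext; simp [mul_add]

lemma tauU_mul (e : ℕ) (f g : LaurentSeries k) :
    tauU e (f * g) = tauU e f * g + f * tauU e g := by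
  ext m
  rw [HahnSeries.coeff_add, HahnSeries.coeff_mul_left' f.isPWO_support (support_tauU_subset e f),
    HahnSeries.coeff_mul_right' g.isPWO_support (support_tauU_subset e g), tauU_coeff,
    HahnSeries.coeff_mul, Finset.mul_sum, ← Finset.sum_add_distrib]
  refine Finset.sum_congr rfl fun ij hij => ?_
  obtain ⟨-, -, hsum⟩ := Finset.mem_antidiagonal.mp hij
  rw [tauU_coeff, tauU_coeff, ← hsum]
  push_cast
  ring

def zmapRetract (e : ℕ) (he : 0 < e) : LaurentSeries k →+ LaurentSeries k where
  toFun f := ⟨fun n => f.coeff (e * n), by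
    rw [Set.isPWO_iff_isWF, Set.isWF_iff_no_descending_seq]
    intro φ hφ hmem
    have hwf := f.isPWO_support'
    rw [Set.isPWO_iff_isWF, Set.isWF_iff_no_descending_seq] at hwf
    exact hwf (fun n => (e : ℤ) * φ n)
      (fun a b hab => mul_lt_mul_of_pos_left (hφ hab) (by exact_mod_cast he)) hmem⟩
  map_zero' := rfl
  map_add' _ _ := by ext; simp

variable (e : ℕ) (he : 0 < e)

lemma zmap_coeff_mul (f : LaurentSeries k) (a : ℤ) :
    (zmap e he f).coeff (e * a) = f.coeff a :=
  HahnSeries.embDomain_coeff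

lemma support_zmap_subset (f : LaurentSeries k) :
    (zmap e he f).support ⊆ (fun a : ℤ => (e : ℤ) * a) '' f.support :=
  HahnSeries.support_embDomain_subset

lemma zmap_coeff_of_notMem_range (f : LaurentSeries k) {m : ℤ}
    (hm : m ∉ Set.range fun a : ℤ => (e : ℤ) * a) : (zmap e he f).coeff m = 0 :=
  HahnSeries.embDomain_of_notMem_range hm

lemma zmap_tauF [CharZero k] (f : LaurentSeries k) :
    zmap e he (tauF f) = tauU e (zmap e he f) := by
  ext m
  by_cases hm : m ∈ Set.range fun a : ℤ => (e : ℤ) * a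
  · obtain ⟨a, rfl⟩ := hm
    have he' : (e : k) ≠ 0 := by exact_mod_cast he.ne'
    rw [zmap_coeff_mul, tauU_coeff, zmap_coeff_mul]
    change (a : k) * f.coeff a = _
    push_cast
    field_simp
  · rw [zmap_coeff_of_notMem_range e he _ hm, tauU_coeff, zmap_coeff_of_notMem_range e he _ hm,
      mul_zero]

@[simp] lemma zmapRetract_coeff (f : LaurentSeries k) (n : ℤ) :
    (zmapRetract e he f).coeff n = f.coeff (e * n) := rfl

lemma zmapRetract_one : zmapRetract e he (1 : LaurentSeries k) = 1 := by
  ext n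
  simp [HahnSeries.coeff_one, he.ne']

lemma zmapRetract_zmap_mul (f c : LaurentSeries k) :
    zmapRetract e he (zmap e he f * c) = f * zmapRetract e he c := by
  have he' : (e : ℤ) ≠ 0 := by exact_mod_cast he.ne'
  ext n
  rw [zmapRetract_coeff, HahnSeries.coeff_mul, HahnSeries.coeff_mul]
  refine (Finset.sum_bij (fun p _ => ((e : ℤ) * p.1, (e : ℤ) * p.2)) ?_ ?_ ?_ ?_).symm
  · rintro ⟨a, b⟩ hab
    obtain ⟨ha, hb, hsum⟩ := Finset.mem_antidiagonal.mp hab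
    refine Finset.mem_antidiagonal.mpr ⟨?_, hb, by rw [← hsum, mul_add]⟩
    rwa [HahnSeries.mem_support, zmap_coeff_mul]
  · rintro ⟨a, b⟩ - ⟨a', b'⟩ - h
    simp only [Prod.mk.injEq, mul_right_inj' he'] at h
    rw [h.1, h.2]
  · rintro ⟨i, j⟩ hij
    obtain ⟨hi, hj, hsum⟩ := Finset.mem_antidiagonal.mp hij
    obtain ⟨a, ha, rfl⟩ := support_zmap_subset e he f hi
    have hj' : j = e * (n - a) := by rw [mul_sub, ← hsum]; ring
    subst hj'
    exact ⟨(a, n - a), Finset.mem_antidiagonal.mpr ⟨ha, hj, by ring⟩, rfl⟩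
  · rintro ⟨a, b⟩ -
    rw [zmap_coeff_mul, zmapRetract_coeff]

end LaurentSeries

open LaurentSeries

theorem stmt0_general [CharZero k] {n : ℕ} (e : ℕ) (he : 0 < e)
    (s : LieSubalgebra (LaurentSeries k) (Matrix (Fin n) (Fin n) (LaurentSeries k)))
    (x : Fin n → ℚ)
    (g : Matrix (Fin n) (Fin n) (LaurentSeries k)) (hg : IsUnit g.det)
    (hdiag : (fun A => g⁻¹ * A * g) ''
        ((Submodule.span (LaurentSeries k)
          ((fun A : Matrix (Fin n) (Fin n) (LaurentSeries k) =>
            A.map (zmap e he)) '' (s : Set (Matrix (Fin n) (Fin n) (LaurentSeries k))))) :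
              Set (Matrix (Fin n) (Fin n) (LaurentSeries k)))
      = diagSet n) :
    (∀ a ∈ s, a.map tauF + diagQ x * a - a * diagQ x ∈ s) ↔
      g⁻¹ * diagQ x * g + g⁻¹ * (g.map (tauU e)) ∈ diagSet n := by
  have hdiagQ : (diagQ x).map (zmap e he) = diagQ (k := k) x := by
    simp [diagQ, Matrix.diagonal_map, zmap]
  have hconj : Function.Semiconj (fun A => g⁻¹ * A * g)
      (derivAd (tauUHom e) (diagQ x))
      (derivAd (tauUHom e) (g⁻¹ * diagQ x * g + g⁻¹ * g.map (tauUHom e))) :=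
    conj_derivAd (tauUHom e) (tauU_mul e) _ (mul_nonsing_inv g hg) (nonsing_inv_mul g hg)
  have hinj : Function.Injective fun A => g⁻¹ * A * g := fun A B hAB => by
    simpa only [mul_assoc, mul_nonsing_inv_cancel_left _ _ hg, mul_nonsing_inv _ hg, mul_one]
      using congrArg (fun M => g * M * g⁻¹) hAB
  have key := mapsTo_derivAd_iff_mapsTo_span (zmap e he) (zmapRetract e he)
    (zmapRetract_zmap_mul e he) (zmapRetract_one e he) (tauUHom e) (tauU_mul e) (zmap_tauF e he)
    (diagQ x) s.toSubmodule
  rw [LieSubalgebra.coe_toSubmodule, hdiagQ, ← hconj.mapsTo_image_iff hinj, hdiag] at key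
  exact key.trans (mapsTo_derivAd_isDiag_iff (map_zero (tauUHom e)) _)

/-- for a Cartan subalgebra `s ⊆ gl_n(F)`, a point `x ∈ ℚ^n`, a splitting field
`E = k((u))` with `u^e = z` and `g ∈ GL_n(E)` with `g⁻¹·s(E)·g = t(E)`, one has
`(τ + ad x̃)(s) ⊆ s` iff `g⁻¹·x̃·g + g⁻¹·τ(g) ∈ t(E)`. -/
theorem stmt0 [IsAlgClosed k] [CharZero k] {n : ℕ} (e : ℕ) (he : 0 < e)
    (s : LieSubalgebra (LaurentSeries k) (Matrix (Fin n) (Fin n) (LaurentSeries k)))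
    (hs : IsCartanLS s) (x : Fin n → ℚ)
    (g : Matrix (Fin n) (Fin n) (LaurentSeries k)) (hg : IsUnit g.det)
    (hdiag : (fun A => g⁻¹ * A * g) ''
        ((Submodule.span (LaurentSeries k)
          ((fun A : Matrix (Fin n) (Fin n) (LaurentSeries k) =>
            A.map (zmap e he)) '' (s : Set (Matrix (Fin n) (Fin n) (LaurentSeries k))))) :
              Set (Matrix (Fin n) (Fin n) (LaurentSeries k)))
      = diagSet n) :
    (∀ a ∈ s, a.map tauF + diagQ x * a - a * diagQ x ∈ s) ↔
      g⁻¹ * diagQ x * g + g⁻¹ * (g.map (tauU e)) ∈ diagSet n :=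
  stmt0_general e he s x g hg hdiag
end
end

section
/- Let s ⊂ gl_n(F) be a Cartan subalgebra and x ∈ ℚ^n with (τ + ad(x̃))(s) ⊆ s, and set s(0) := s ∩ ker(τ + ad(x̃)). Then for y ∈ ℚ^n one has (τ + ad(ỹ))(s) ⊆ s if and only if x̃ − ỹ ∈ s(0). -/
noncomputable section

open Polynomial Matrix

attribute [local instance 100] LieRing.ofAssociativeRing

variable {k : Type*} [Field k]

/-- The operator `τ + ad(x̃)` on `gl_n(F)`. -/
def DD {n : ℕ} (x : Fin n → ℚ) (A : Matrix (Fin n) (Fin n) (LaurentSeries k)) :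
    Matrix (Fin n) (Fin n) (LaurentSeries k) :=
  A.map tauF + diagQ x * A - A * diagQ x

/-! The operators `τ + ad x̃` and `τ + ad ỹ` differ by `ad (x̃ - ỹ)`. Hence
`(τ + ad ỹ)(s) ⊆ s` says that `x̃ - ỹ` normalizes `s`, i.e. lies in `s`; conversely `ad (x̃ - ỹ)`
vanishes on the commutative `s`. Being a constant diagonal matrix, `x̃ - ỹ` is killed by
`τ + ad x̃`. -/

lemma tauF_C (c : k) : tauF (HahnSeries.C c) = 0 := by
  ext m
  change (m : k) * (HahnSeries.C c).coeff m = 0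
  rcases eq_or_ne m 0 with rfl | hm
  · simp
  · simp [HahnSeries.C_apply, HahnSeries.coeff_single_of_ne hm]

lemma tauF_sub (f g : LaurentSeries k) : tauF (f - g) = tauF f - tauF g := by
  ext m
  change (m : k) * (f - g).coeff m = (m : k) * f.coeff m - (m : k) * g.coeff m
  rw [HahnSeries.coeff_sub, mul_sub]

section Diagonal

variable {n : ℕ}

lemma map_tauF_diagQ (x : Fin n → ℚ) : (diagQ (k := k) x).map tauF = 0 := by
  have tauF_zero : tauF (0 : LaurentSeries k) = 0 := by simpa using tauF_C (0 : k)
  simp only [diagQ, diagonal_map tauF_zero, tauF_C, diagonal_zero]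

lemma diagQ_mul_comm (x y : Fin n → ℚ) :
    diagQ (k := k) x * diagQ y = diagQ y * diagQ x := by
  simp only [diagQ, diagonal_mul_diagonal, mul_comm]

lemma DD_diagQ_sub (x y : Fin n → ℚ) : DD x (diagQ (k := k) x - diagQ y) = 0 := by
  rw [DD, Matrix.map_sub tauF tauF_sub, map_tauF_diagQ, map_tauF_diagQ, mul_sub, sub_mul,
    diagQ_mul_comm x y]
  abel

lemma DD_sub_DD (x y : Fin n → ℚ) (a : Matrix (Fin n) (Fin n) (LaurentSeries k)) :
    DD x a - DD y a = ⁅diagQ (k := k) x - diagQ y, a⁆ := by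
  simp only [DD, Ring.lie_def, sub_mul, mul_sub]
  abel

end Diagonal

namespace IsCartanLS

variable {n : ℕ}
  {s : LieSubalgebra (LaurentSeries k) (Matrix (Fin n) (Fin n) (LaurentSeries k))}

lemma lie_eq_zero (hs : IsCartanLS s) {d a : Matrix (Fin n) (Fin n) (LaurentSeries k)}
    (hd : d ∈ s) (ha : a ∈ s) : ⁅d, a⁆ = 0 := by
  rw [Ring.lie_def, sub_eq_zero, hs.1 d hd a ha]

lemma mem_of_lie_mem (hs : IsCartanLS s) {d : Matrix (Fin n) (Fin n) (LaurentSeries k)}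
    (hd : ∀ a ∈ s, ⁅d, a⁆ ∈ s) : d ∈ s := by
  rw [← hs.2, LieSubalgebra.mem_normalizer_iff]
  exact hd

end IsCartanLS

theorem stmt2_general {n : ℕ}
    (s : LieSubalgebra (LaurentSeries k) (Matrix (Fin n) (Fin n) (LaurentSeries k)))
    (hs : IsCartanLS s) (x : Fin n → ℚ)
    (hx : ∀ a ∈ s, DD x a ∈ s) (y : Fin n → ℚ) :
    (∀ a ∈ s, DD y a ∈ s) ↔
      ((diagQ (k := k) x - diagQ (k := k) y) ∈ s ∧
        DD x (diagQ (k := k) x - diagQ (k := k) y) = 0) := by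
  constructor
  · intro hy
    refine ⟨hs.mem_of_lie_mem fun a ha => ?_, DD_diagQ_sub x y⟩
    rw [← DD_sub_DD]
    exact sub_mem (hx a ha) (hy a ha)
  · rintro ⟨hd, -⟩ a ha
    have hDD : DD x a = DD y a := by
      rw [← sub_eq_zero, DD_sub_DD, hs.lie_eq_zero hd ha]
    exact hDD ▸ hx a ha

/-- if `s` is a Cartan subalgebra with `(τ + ad x̃)(s) ⊆ s` and
`s(0) := s ∩ ker (τ + ad x̃)`, then for `y ∈ ℚ^n` one has `(τ + ad ỹ)(s) ⊆ s`
iff `x̃ − ỹ ∈ s(0)`. -/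
theorem stmt2 [IsAlgClosed k] [CharZero k] {n : ℕ}
    (s : LieSubalgebra (LaurentSeries k) (Matrix (Fin n) (Fin n) (LaurentSeries k)))
    (hs : IsCartanLS s) (x : Fin n → ℚ)
    (hx : ∀ a ∈ s, DD x a ∈ s) (y : Fin n → ℚ) :
    (∀ a ∈ s, DD y a ∈ s) ↔
      ((diagQ (k := k) x - diagQ (k := k) y) ∈ s ∧
        DD x (diagQ (k := k) x - diagQ (k := k) y) = 0) :=
  stmt2_general s hs x hx y
end
end

section
/- Let T = (k^×)^n and let w ∈ S_n act on T by permuting coordinates. Then every t ∈ T can be written t = δ_w(t₁)·t₂ where δ_w(t₁) := w^{-1}(t₁)·t₁^{-1} and t₂ ∈ T satisfies w(t₂) = t₂. -/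
/-!
On a cycle of length `m` of `w`, take for `t₂` a constant `m`-th root of the product of `t` over
the cycle. Then `s = t / t₂` has product `1` over every cycle, and a norm-one cocycle of a cyclic
group is a coboundary: walking around the cycle from a base point `r`, put
`t₁ (w^[a] r) = ∏_{l < a} s (w^[l] r)`, which is well defined because the product over a full
turn is `1`.
-/

open Function Finset

section OrbitProd

variable {α G : Type*} [CommGroup G]

def orbitProd (f : α → α) (s : α → G) (j : ℕ) (x : α) : G :=
  ∏ l ∈ range j, s (f^[l] x)

variable {f : α → α} {s : α → G} {x : α}

theorem orbitProd_add (i j : ℕ) (x : α) :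
    orbitProd f s (i + j) x = orbitProd f s i x * orbitProd f s j (f^[i] x) := by
  simp only [orbitProd, prod_range_add, ← iterate_add_apply, add_comm]

theorem orbitProd_succ (j : ℕ) (x : α) :
    orbitProd f s (j + 1) x = orbitProd f s j x * s (f^[j] x) :=
  prod_range_succ _ _

theorem orbitProd_succ' (j : ℕ) (x : α) :
    orbitProd f s (j + 1) x = s x * orbitProd f s j (f x) := by
  simp only [orbitProd, prod_range_succ', iterate_succ_apply, iterate_zero_apply, mul_comm]

theorem orbitProd_div (t : α → G) (j : ℕ) (x : α) :
    orbitProd f (s / t) j x = orbitProd f s j x / orbitProd f t j x :=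
  prod_div_distrib _ _

theorem orbitProd_of_comp_eq (h : s ∘ f = s) (j : ℕ) (x : α) : orbitProd f s j x = s x ^ j := by
  simp only [orbitProd, ← comp_apply (f := s), iterate_invariant h, prod_const, card_range]

theorem orbitProd_minimalPeriod_apply :
    orbitProd f s (minimalPeriod f x) (f x) = orbitProd f s (minimalPeriod f x) x := by
  have h := (orbitProd_succ' (f := f) (s := s) (minimalPeriod f x) x).symm
  rw [orbitProd_succ, (isPeriodicPt_minimalPeriod f x).eq, mul_comm] at h
  exact mul_right_cancel h

theorem orbitProd_mul_minimalPeriod (h : orbitProd f s (minimalPeriod f x) x = 1) (q : ℕ) :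
    orbitProd f s (minimalPeriod f x * q) x = 1 := by
  induction q with
  | zero => simp [orbitProd]
  | succ q ih =>
    rw [mul_add_one, orbitProd_add, ih, ((isPeriodicPt_minimalPeriod f x).mul_const q).eq, h,
      one_mul]

theorem orbitProd_mod_minimalPeriod (h : orbitProd f s (minimalPeriod f x) x = 1) (j : ℕ) :
    orbitProd f s (j % minimalPeriod f x) x = orbitProd f s j x := by
  conv_rhs => rw [← Nat.div_add_mod j (minimalPeriod f x)]
  rw [orbitProd_add, orbitProd_mul_minimalPeriod h, one_mul,
    ((isPeriodicPt_minimalPeriod f x).mul_const _).eq]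

theorem orbitProd_congr_of_iterate_eq (hx : x ∈ periodicPts f)
    (h : orbitProd f s (minimalPeriod f x) x = 1) {i j : ℕ} (hij : f^[i] x = f^[j] x) :
    orbitProd f s i x = orbitProd f s j x := by
  have hm := minimalPeriod_pos_of_mem_periodicPts hx
  rw [← orbitProd_mod_minimalPeriod h i, ← orbitProd_mod_minimalPeriod h j,
    (iterate_eq_iterate_iff_of_lt_minimalPeriod (Nat.mod_lt i hm) (Nat.mod_lt j hm)).1]
  rwa [iterate_mod_minimalPeriod_eq, iterate_mod_minimalPeriod_eq]

end OrbitProd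

namespace Equiv.Perm

variable {α G : Type*} [Finite α] [CommGroup G]

theorem exists_apply_eq_mul_of_orbitProd_eq_one (σ : Perm α) {s : α → G}
    (hs : ∀ x, orbitProd σ s (minimalPeriod σ x) x = 1) :
    ∃ u : α → G, ∀ x, u (σ x) = s x * u x := by
  let r : α → α := fun x => (Quotient.mk (SameCycle.setoid σ) x).out
  have hr (x : α) : σ.SameCycle (r x) x := Quotient.mk_out (s := SameCycle.setoid σ) x
  have hr_apply (x : α) : r (σ x) = r x :=
    congrArg Quotient.out (Quotient.sound (sameCycle_apply_left.2 (SameCycle.refl σ x)))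
  choose a ha using fun x => (hr x).exists_nat_pow_eq
  simp only [coe_pow] at ha
  refine ⟨fun x => orbitProd σ s (a x) (r x), fun x => ?_⟩
  have h_step : orbitProd σ s (a (σ x)) (r x) = orbitProd σ s (a x + 1) (r x) := by
    refine orbitProd_congr_of_iterate_eq (σ.injective.mem_periodicPts _) (hs _) ?_
    rw [iterate_succ_apply', ha, ← hr_apply, ha]
  simp only [hr_apply, h_step, orbitProd_succ, ha, mul_comm]

variable [RootableBy G ℕ]

theorem exists_eq_apply_mul_inv_mul_of_rootableBy (σ : Perm α) (t : α → G) :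
    ∃ u v : α → G, (∀ x, v (σ x) = v x) ∧ ∀ x, t x = u (σ x) * (u x)⁻¹ * v x := by
  have hper := σ.injective.mem_periodicPts
  let v : α → G := fun x =>
    RootableBy.root (orbitProd σ t (minimalPeriod σ x) x) (minimalPeriod σ x)
  have hv (x : α) : v (σ x) = v x := by
    simp only [v, minimalPeriod_apply (hper x), orbitProd_minimalPeriod_apply]
  have hv_pow (x : α) : v x ^ minimalPeriod σ x = orbitProd σ t (minimalPeriod σ x) x :=
    RootableBy.root_cancel _ (minimalPeriod_pos_of_mem_periodicPts (hper x)).ne'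
  obtain ⟨u, hu⟩ := σ.exists_apply_eq_mul_of_orbitProd_eq_one (s := t / v) fun x => by
    rw [orbitProd_div, orbitProd_of_comp_eq (s := v) (funext hv), hv_pow, div_self']
  exact ⟨u, v, hv, fun x => by rw [hu, Pi.div_apply, mul_inv_cancel_right, div_mul_cancel]⟩

end Equiv.Perm

theorem IsAlgClosed.surjective_pow_units {k : Type*} [Field k] [IsAlgClosed k] {m : ℕ}
    (hm : m ≠ 0) : Surjective fun a : kˣ => a ^ m := fun x => by
  obtain ⟨y, hy⟩ := IsAlgClosed.exists_pow_nat_eq (x : k) (Nat.pos_of_ne_zero hm)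
  have hy0 : y ≠ 0 := by
    rintro rfl
    exact x.ne_zero (by rw [← hy, zero_pow hm])
  exact ⟨Units.mk0 y hy0, Units.ext (by simpa using hy)⟩

noncomputable instance IsAlgClosed.rootableByUnits {k : Type*} [Field k] [IsAlgClosed k] :
    RootableBy kˣ ℕ :=
  rootableByOfPowLeftSurj _ _ IsAlgClosed.surjective_pow_units

theorem stmt5_general {k : Type*} [Field k] [IsAlgClosed k] {n : ℕ}
    (w : Equiv.Perm (Fin n)) (t : Fin n → kˣ) :
    ∃ t₁ t₂ : Fin n → kˣ,
      (∀ i, t₂ (w⁻¹ i) = t₂ i) ∧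
      (∀ i, t i = t₁ (w i) * (t₁ i)⁻¹ * t₂ i) := by
  obtain ⟨t₁, t₂, ht₂, ht⟩ := w.exists_eq_apply_mul_inv_mul_of_rootableBy t
  refine ⟨t₁, t₂, fun i => ?_, ht⟩
  simpa using (ht₂ (w⁻¹ i)).symm

/-- for the torus `T = (k^×)^n` with `S_n` acting by permuting coordinates
(`(w·t)_i = t_{w⁻¹(i)}`), every `t ∈ T` can be written `t = δ_w(t₁)·t₂` with
`δ_w(t₁) = w⁻¹(t₁)·t₁⁻¹` (so `δ_w(t₁)_i = t₁(w(i))·t₁(i)⁻¹`) and `w(t₂) = t₂`. -/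
theorem stmt5 {k : Type*} [Field k] [IsAlgClosed k] [CharZero k] {n : ℕ}
    (w : Equiv.Perm (Fin n)) (t : Fin n → kˣ) :
    ∃ t₁ t₂ : Fin n → kˣ,
      (∀ i, t₂ (w⁻¹ i) = t₂ i) ∧
      (∀ i, t i = t₁ (w i) * (t₁ i)⁻¹ * t₂ i) :=
  stmt5_general w t
end

section
/- Let w ∈ S_n with permutation matrix P (so P·e_j = e_{w(j)}), let d_1,…,d_n ∈ F^×, and set m := P·diag(d_1,…,d_n) ∈ GL_n(F). Let x ∈ ℚ^n. Then: (i) the matrix u := m·x̃·m^{-1} − τ(m)·m^{-1} is diagonal, and its (w(j),w(j)) entry lies in x_j − ord(d_j) + z·k[[z]]; (ii) if moreover each d_j = c_j·z^{a_j} with c_j ∈ k^× and a_j ∈ ℤ, then m·g_x(r)·m^{-1} = g_y(r) for every r ∈ ℚ, where y ∈ ℚ^n is defined by y_{w(j)} = x_j − a_j. -/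
noncomputable section

open Polynomial Matrix

variable {k : Type*} [Field k]

/-- The Moy–Prasad graded piece `g_x(r)`: the span of the `E_{ij}·z^m` with
`m + x_i − x_j = r`. -/
def Gr {n : ℕ} (x : Fin n → ℚ) (r : ℚ) : Set (Matrix (Fin n) (Fin n) (LaurentSeries k)) :=
  {A | ∀ i j, ∀ m : ℤ, (A i j).coeff m ≠ 0 → (m : ℚ) + x i - x j = r}

/-! Write `m = P·diag(d)`. Conjugation by `m` rescales the `(i, j)` entry by `d_i d_j⁻¹` and
then relabels rows and columns along `w`, so `m·A·m⁻¹` has `(w i, w j)` entry `d_i A_ij d_j⁻¹`.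
The same bookkeeping gives `u = P·diag(x_j − τ(d_j)/d_j)·P⁻¹`, and `τ(d)/d ≡ ord(d)` modulo
`z·k[[z]]` because `τ(d) − ord(d)·d` has order larger than `ord(d)`. When `d_j = c_j z^{a_j}`
the rescaling moves the coefficient of `z^m` in the `(i, j)` entry to `z^{m + a_i − a_j}`,
which is exactly the change of grading `x ↦ x − a`. -/

section MonomialMatrix

variable {ι K : Type*} [Fintype ι]

theorem Matrix.submatrix_id_mul_submatrix_id {l o : Type*} [Semiring K] (D E : Matrix ι ι K)
    (e₁ : l → ι) (e₂ : o → ι) :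
    D.submatrix e₁ id * E.submatrix id e₂ = (D * E).submatrix e₁ e₂ :=
  submatrix_mul_equiv D E e₁ (Equiv.refl ι) e₂

theorem Matrix.submatrix_id_mul {l : Type*} [Semiring K] (D A : Matrix ι ι K) (e : l → ι) :
    D.submatrix e id * A = (D * A).submatrix e id := by
  simpa using submatrix_id_mul_submatrix_id D A e id

variable [DecidableEq ι]

theorem Matrix.of_ite_eq_mul_diagonal [Semiring K] (w : Equiv.Perm ι) (d : ι → K) :
    (of fun i j => if i = w j then (1 : K) else 0) * diagonal d
      = (diagonal d).submatrix w.symm id := by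
  ext i j
  simp only [mul_diagonal, of_apply, submatrix_apply, id, diagonal_apply, Equiv.symm_apply_eq]
  split_ifs with h <;> simp [h]

variable [Field K]

theorem Matrix.diagonal_mul_diagonal_inv {d : ι → K} (hd : ∀ i, d i ≠ 0) :
    diagonal d * diagonal d⁻¹ = 1 := by
  rw [diagonal_mul_diagonal, ← diagonal_one]
  exact congrArg diagonal (funext fun i => mul_inv_cancel₀ (hd i))

theorem Matrix.inv_diagonal_of_ne_zero {d : ι → K} (hd : ∀ i, d i ≠ 0) :
    (diagonal d)⁻¹ = diagonal d⁻¹ :=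
  inv_eq_right_inv (diagonal_mul_diagonal_inv hd)

theorem Matrix.inv_submatrix_diagonal (w : Equiv.Perm ι) {d : ι → K} (hd : ∀ i, d i ≠ 0) :
    ((diagonal d).submatrix w id)⁻¹ = (diagonal d⁻¹).submatrix id w := by
  rw [show (diagonal d).submatrix w id = (diagonal d).submatrix w (Equiv.refl ι) from rfl,
    inv_submatrix_equiv, inv_diagonal_of_ne_zero hd]
  rfl

theorem Matrix.submatrix_diagonal_conj (w : Equiv.Perm ι) {d : ι → K} (hd : ∀ i, d i ≠ 0)
    (A : Matrix ι ι K) :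
    (diagonal d).submatrix w id * A * ((diagonal d).submatrix w id)⁻¹
      = (diagonal d * A * diagonal d⁻¹).submatrix w w := by
  rw [inv_submatrix_diagonal w hd, submatrix_id_mul, submatrix_id_mul_submatrix_id]

theorem Matrix.submatrix_diagonal_conj_surjective (w : Equiv.Perm ι) {d : ι → K}
    (hd : ∀ i, d i ≠ 0) :
    Function.Surjective fun A =>
      (diagonal d).submatrix w id * A * ((diagonal d).submatrix w id)⁻¹ := by
  set M := (diagonal d).submatrix w id
  have hM : M * M⁻¹ = 1 := by
    rw [inv_submatrix_diagonal w hd, submatrix_id_mul_submatrix_id, diagonal_mul_diagonal_inv hd,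
      submatrix_one_equiv]
  refine fun B => ⟨M⁻¹ * B * M, ?_⟩
  simp only [← Matrix.mul_assoc, hM, Matrix.one_mul]
  rw [Matrix.mul_assoc, hM, Matrix.mul_one]

end MonomialMatrix

theorem HahnSeries.coeff_single_mul_mul_single {Γ R : Type*} [AddCommGroup Γ] [PartialOrder Γ]
    [IsOrderedCancelAddMonoid Γ] [NonUnitalNonAssocSemiring R] (a b : Γ) (r s : R)
    (f : HahnSeries Γ R) (m : Γ) :
    (single a r * f * single b s).coeff m = r * f.coeff (m - a - b) * s := by
  have h := coeff_mul_single_add (r := s) (x := single a r * f) (a := m - b) (b := b)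
  rw [sub_add_cancel] at h
  rw [h, sub_right_comm, ← coeff_single_mul_add (r := r) (x := f) (b := a), sub_add_cancel]

section Tau

theorem tauF_coeff (f : LaurentSeries k) (m : ℤ) : (tauF f).coeff m = m * f.coeff m := rfl

theorem tauF_zero : tauF (0 : LaurentSeries k) = 0 := by
  ext m
  simp [tauF_coeff]

theorem coeff_tauF_sub_C_order_mul (f : LaurentSeries k) (m : ℤ) :
    (tauF f - HahnSeries.C (f.order : k) * f).coeff m = (m - f.order) * f.coeff m := by
  rw [HahnSeries.coeff_sub, tauF_coeff, HahnSeries.C_mul_eq_smul, HahnSeries.coeff_smul,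
    smul_eq_mul, sub_mul]

theorem order_lt_order_tauF_sub_C_order_mul {f : LaurentSeries k}
    (hg : tauF f - HahnSeries.C (f.order : k) * f ≠ 0) :
    f.order < (tauF f - HahnSeries.C (f.order : k) * f).order := by
  by_contra! hle
  refine hg (HahnSeries.coeff_order_eq_zero.mp ?_)
  rw [coeff_tauF_sub_C_order_mul]
  rcases hle.lt_or_eq with hlt | heq
  · rw [HahnSeries.coeff_eq_zero_of_lt_order hlt, mul_zero]
  · rw [heq, sub_self, zero_mul]

theorem coeff_C_order_sub_tauF_mul_inv {f : LaurentSeries k} (hf : f ≠ 0) {m : ℤ}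
    (hm : m ≤ 0) :
    (HahnSeries.C (f.order : k) - tauF f * f⁻¹).coeff m = 0 := by
  set g := tauF f - HahnSeries.C (f.order : k) * f with hg
  have hfg : HahnSeries.C (f.order : k) - tauF f * f⁻¹ = -(g * f⁻¹) := by
    rw [hg, sub_mul, mul_assoc, mul_inv_cancel₀ hf, mul_one, neg_sub]
  rw [hfg, HahnSeries.coeff_neg, neg_eq_zero]
  rcases eq_or_ne g 0 with hg0 | hg0
  · rw [hg0, zero_mul, HahnSeries.coeff_zero]
  have hinv : f.order + f⁻¹.order = 0 := by
    rw [← HahnSeries.order_mul hf (inv_ne_zero hf), mul_inv_cancel₀ hf, HahnSeries.order_one]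
  have hlt : f.order < g.order := order_lt_order_tauF_sub_C_order_mul hg0
  have hpos : 0 < (g * f⁻¹).order := by
    rw [HahnSeries.order_mul hg0 (inv_ne_zero hf)]
    omega
  exact HahnSeries.coeff_eq_zero_of_lt_order (hm.trans_lt hpos)

theorem submatrix_diagonal_gauge_diagonal {ι : Type*} [Fintype ι] [DecidableEq ι]
    (w : Equiv.Perm ι) {d : ι → LaurentSeries k} (hd : ∀ i, d i ≠ 0)
    (e : ι → LaurentSeries k) :
    (diagonal d).submatrix w id * diagonal e * ((diagonal d).submatrix w id)⁻¹
        - ((diagonal d).submatrix w id).map tauF * ((diagonal d).submatrix w id)⁻¹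
      = (diagonal fun j => e j - tauF (d j) * (d j)⁻¹).submatrix w w := by
  have hdiag : diagonal d * diagonal e * diagonal d⁻¹
        - diagonal (fun j => tauF (d j)) * diagonal d⁻¹
      = diagonal fun j => e j - tauF (d j) * (d j)⁻¹ := by
    have hconj : ∀ j, d j * e j * (d j)⁻¹ = e j := fun j => by
      rw [mul_comm (d j), mul_inv_cancel_right₀ (hd j)]
    simp only [diagonal_mul_diagonal, Pi.inv_apply, hconj, diagonal_sub]
  rw [submatrix_diagonal_conj w hd, ← submatrix_map, diagonal_map tauF_zero,
    inv_submatrix_diagonal w hd, submatrix_id_mul_submatrix_id, ← hdiag]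
  rfl

end Tau

section GradedPiece

variable {n : ℕ}

theorem submatrix_mem_Gr_iff (σ : Equiv.Perm (Fin n)) (x : Fin n → ℚ) (r : ℚ)
    (A : Matrix (Fin n) (Fin n) (LaurentSeries k)) :
    A.submatrix σ σ ∈ Gr x r ↔ A ∈ Gr (x ∘ σ.symm) r := by
  simp only [Gr, Set.mem_ofPred_eq, submatrix_apply, Function.comp_apply]
  exact ⟨fun h i j => by simpa using h (σ.symm i) (σ.symm j),
    fun h i j => by simpa using h (σ i) (σ j)⟩

theorem diagonal_single_conj_mem_Gr_iff (a : Fin n → ℤ) {c : Fin n → k} (hc : ∀ i, c i ≠ 0)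
    (x : Fin n → ℚ) (r : ℚ) (A : Matrix (Fin n) (Fin n) (LaurentSeries k)) :
    diagonal (fun i => HahnSeries.single (a i) (c i)) * A *
        diagonal (fun i => HahnSeries.single (a i) (c i))⁻¹ ∈ Gr (fun i => x i - a i) r ↔
      A ∈ Gr x r := by
  simp only [Gr, Set.mem_ofPred_eq, diagonal_mul, mul_diagonal, Pi.inv_apply,
    HahnSeries.inv_single, HahnSeries.coeff_single_mul_mul_single]
  refine forall₂_congr fun i j => (Equiv.subRight (a i - a j)).forall_congr fun m => ?_
  have hshift : m - a i - -a j = m - (a i - a j) := by ring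
  rw [hshift, Equiv.subRight_apply, mul_ne_zero_iff, mul_ne_zero_iff, and_iff_right (hc i),
    and_iff_left (inv_ne_zero (hc j))]
  push_cast
  constructor <;> intro h hA <;> linarith [h hA]

theorem submatrix_diagonal_single_conj_image_Gr (w : Equiv.Perm (Fin n)) (a : Fin n → ℤ)
    {c : Fin n → k} (hc : ∀ i, c i ≠ 0) (x : Fin n → ℚ) (r : ℚ) :
    (fun A => (diagonal fun i => HahnSeries.single (a i) (c i)).submatrix w.symm id * A *
        ((diagonal fun i => HahnSeries.single (a i) (c i)).submatrix w.symm id)⁻¹) '' Gr x r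
      = Gr (fun i => x (w⁻¹ i) - a (w⁻¹ i)) r := by
  have hd : ∀ i, HahnSeries.single (a i) (c i) ≠ 0 := fun i =>
    HahnSeries.single_ne_zero (hc i)
  have hy : (fun i => x (w⁻¹ i) - (a (w⁻¹ i) : ℚ)) ∘ w.symm.symm = fun i => x i - a i := by
    funext i
    simp
  have hmem : ∀ A, A ∈ Gr x r ↔ (diagonal fun i => HahnSeries.single (a i) (c i)).submatrix
      w.symm id * A * ((diagonal fun i => HahnSeries.single (a i) (c i)).submatrix w.symm id)⁻¹
        ∈ Gr (fun i => x (w⁻¹ i) - a (w⁻¹ i)) r := fun A => by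
    rw [submatrix_diagonal_conj w.symm hd, submatrix_mem_Gr_iff, hy,
      diagonal_single_conj_mem_Gr_iff a hc x r A]
  rw [Set.ext hmem]
  exact (submatrix_diagonal_conj_surjective w.symm hd).image_preimage (Gr _ r)

end GradedPiece

theorem stmt7_general [CharZero k] {n : ℕ}
    (w : Equiv.Perm (Fin n)) (x : Fin n → ℚ) (d : Fin n → LaurentSeries k)
    (hd : ∀ j, d j ≠ 0)
    (P : Matrix (Fin n) (Fin n) (LaurentSeries k))
    (hP : P = Matrix.of fun i j => if i = w j then 1 else 0)
    (mm : Matrix (Fin n) (Fin n) (LaurentSeries k))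
    (hm : mm = P * Matrix.diagonal d)
    (u : Matrix (Fin n) (Fin n) (LaurentSeries k))
    (hu : u = mm * diagQ x * mm⁻¹ - (mm.map tauF) * mm⁻¹) :
    -- (i) u is diagonal ...
    (∀ i j, i ≠ j → u i j = 0) ∧
    -- ... with (w j, w j) entry in  x_j − ord(d_j) + z·k[[z]]
    (∀ j : Fin n, ∀ mz : ℤ, mz ≤ 0 →
      (u (w j) (w j) -
        HahnSeries.C (((x j - (((d j).order : ℤ) : ℚ)) : ℚ) : k)).coeff mz = 0) ∧
    -- (ii)
    (∀ (a : Fin n → ℤ) (c : Fin n → k), (∀ j, c j ≠ 0) →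
      (∀ j, d j = HahnSeries.single (a j) (c j)) →
      ∀ r : ℚ, (fun A => mm * A * mm⁻¹) '' (Gr x r)
        = Gr (fun i => x (w⁻¹ i) - (a (w⁻¹ i) : ℚ)) r) := by
  have hmm : mm = (diagonal d).submatrix w.symm id := by
    rw [hm, hP, of_ite_eq_mul_diagonal]
  have hu' : u = (diagonal fun j => HahnSeries.C (x j : k) - tauF (d j) * (d j)⁻¹).submatrix
      w.symm w.symm := by
    rw [hu, hmm, diagQ, submatrix_diagonal_gauge_diagonal w.symm hd]
  refine ⟨fun i j hij => ?_, fun j mz hmz => ?_, fun a c hc hdc r => ?_⟩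
  · rw [hu', submatrix_apply, diagonal_apply_ne _ (w.symm.injective.ne hij)]
  · rw [hu', submatrix_apply, Equiv.symm_apply_apply, diagonal_apply_eq, Rat.cast_sub,
      Rat.cast_intCast, map_sub, sub_sub_sub_cancel_left]
    exact coeff_C_order_sub_tauF_mul_inv (hd j) hmz
  · rw [hmm, funext hdc]
    exact submatrix_diagonal_single_conj_image_Gr w a hc x r

/-- for `m = P·diag(d₁,…,dₙ)` with `P` the permutation matrix of `w`
(`P·e_j = e_{w(j)}`) and `d_j ∈ F^×`: (i) `u := m·x̃·m⁻¹ − τ(m)·m⁻¹` is diagonal with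
`(w(j),w(j))` entry in `x_j − ord(d_j) + z·k[[z]]`; (ii) if each `d_j = c_j·z^{a_j}` then
`m·g_x(r)·m⁻¹ = g_y(r)` for all `r`, where `y_{w(j)} = x_j − a_j`. -/
theorem stmt7 [IsAlgClosed k] [CharZero k] {n : ℕ}
    (w : Equiv.Perm (Fin n)) (x : Fin n → ℚ) (d : Fin n → LaurentSeries k)
    (hd : ∀ j, d j ≠ 0)
    (P : Matrix (Fin n) (Fin n) (LaurentSeries k))
    (hP : P = Matrix.of fun i j => if i = w j then 1 else 0)
    (mm : Matrix (Fin n) (Fin n) (LaurentSeries k))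
    (hm : mm = P * Matrix.diagonal d)
    (u : Matrix (Fin n) (Fin n) (LaurentSeries k))
    (hu : u = mm * diagQ x * mm⁻¹ - (mm.map tauF) * mm⁻¹) :
    -- (i) u is diagonal ...
    (∀ i j, i ≠ j → u i j = 0) ∧
    -- ... with (w j, w j) entry in  x_j − ord(d_j) + z·k[[z]]
    (∀ j : Fin n, ∀ mz : ℤ, mz ≤ 0 →
      (u (w j) (w j) -
        HahnSeries.C (((x j - (((d j).order : ℤ) : ℚ)) : ℚ) : k)).coeff mz = 0) ∧
    -- (ii)
    (∀ (a : Fin n → ℤ) (c : Fin n → k), (∀ j, c j ≠ 0) →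
      (∀ j, d j = HahnSeries.single (a j) (c j)) →
      ∀ r : ℚ, (fun A => mm * A * mm⁻¹) '' (Gr x r)
        = Gr (fun i => x (w⁻¹ i) - (a (w⁻¹ i) : ℚ)) r) :=
  stmt7_general w x d hd P hP mm hm u hu
end
end

section
/- Let x ∈ ℚ^n, r ∈ ℚ with r ≥ 0, and let X ∈ g_x(−r) be such that the centralizer s := {A ∈ gl_n(F) : [A,X] = 0} is a Cartan subalgebra of gl_n(F). Then for every j ∈ ℚ there is a direct sum decomposition g_x(j−r) = [X, g_x(j)] ⊕ (s ∩ g_x(j−r)), and the two summands are orthogonal with respect to the trace pairing (A,B) ↦ tr(AB). -/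
/-!
The Cartan hypotheses give `ker (ad X)² = ker (ad X)`: if `[X, [X, A]] = 0` then `[X, A]`
lies in the commutative centralizer `s`, so by the Jacobi identity `A` normalizes `s` and hence
lies in `s`. Thus `ker (ad X) ∩ im (ad X) = 0`, and rank–nullity gives
`gl_n(F) = s ⊕ [X, gl_n(F)]`. As `X` is homogeneous of degree `-r`, projecting onto the graded
pieces intertwines `ad X` with a shift of degree by `-r`, so this decomposition restricts to each
degree. Orthogonality is the invariance of the trace form: `tr([X, A] B) = tr(A [B, X]) = 0`
for `B ∈ s`.
-/

noncomputable section

open Polynomial Matrix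

variable {k : Type*} [Field k]

attribute [local instance] LieRing.ofAssociativeRing

theorem commute_of_commute_lie {R : Type*} [Ring R] {X : R}
    (hcomm : ∀ a b : R, Commute a X → Commute b X → Commute a b)
    (hnorm : ∀ A : R, (∀ b, Commute b X → Commute ⁅A, b⁆ X) → Commute A X)
    {A : R} (h : Commute ⁅X, A⁆ X) : Commute A X := by
  refine hnorm A fun b hb => ?_
  have hbA : ⁅b, ⁅X, A⁆⁆ = 0 := commute_iff_lie_eq.1 (hcomm _ _ h hb).symm
  have hbX : ⁅b, X⁆ = 0 := commute_iff_lie_eq.1 hb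
  rw [commute_iff_lie_eq, lie_lie, hbX, lie_zero, zero_sub, neg_eq_zero,
    ← lie_skew A X, lie_neg, hbA, neg_zero]

theorem exists_eq_lie_add_of_commute {K R : Type*} [Field K] [Ring R] [Algebra K R]
    [FiniteDimensional K R] {X : R} (hX : ∀ A : R, Commute ⁅X, A⁆ X → Commute A X) (Z : R) :
    ∃ A B : R, Commute B X ∧ Z = ⁅X, A⁆ + B := by
  set f := LieAlgebra.ad K R X
  have hdisj : Disjoint (LinearMap.ker f) (LinearMap.range f) := by
    rw [Submodule.disjoint_def]
    rintro _ hker ⟨A, rfl⟩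
    exact commute_iff_lie_eq.1 (hX A (commute_iff_lie_eq.2 hker).symm).symm
  have hsup : LinearMap.ker f ⊔ LinearMap.range f = ⊤ :=
    Submodule.eq_top_of_disjoint _ _
      (by rw [add_comm, f.finrank_range_add_finrank_ker]) hdisj
  obtain ⟨B, hB, _, ⟨A, rfl⟩, hZ⟩ :=
    Submodule.mem_sup.1 (hsup ▸ Submodule.mem_top (x := Z))
  exact ⟨A, B, (commute_iff_lie_eq.2 hB).symm, by rw [← hZ, add_comm]; rfl⟩

theorem Matrix.trace_lie_mul_eq_zero_of_commute {n R : Type*} [Fintype n] [CommRing R]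
    {X B : Matrix n n R} (A : Matrix n n R) (hB : Commute B X) : (⁅X, A⁆ * B).trace = 0 := by
  rw [Ring.lie_def, sub_mul, trace_sub, sub_eq_zero]
  calc (X * A * B).trace = (B * X * A).trace := trace_mul_cycle X A B
    _ = (X * B * A).trace := by rw [hB.eq]
    _ = (A * X * B).trace := trace_mul_cycle X B A

namespace LaurentSeries

/-- The degree is rational: when `a ∉ ℤ`, only `0` is homogeneous of degree `a`. -/
def IsHomogeneous (a : ℚ) (f : LaurentSeries k) : Prop :=
  ∀ m : ℤ, f.coeff m ≠ 0 → (m : ℚ) = a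

def homogeneousComponent (c : ℚ) : LaurentSeries k →+ LaurentSeries k where
  toFun f := ⟨fun m => if (m : ℚ) = c then f.coeff m else 0,
    f.isPWO_support'.mono fun m hm h => hm (by simp [h])⟩
  map_zero' := by ext; simp
  map_add' f g := by ext m; simp only [HahnSeries.coeff_add]; split_ifs <;> simp

@[simp]
theorem coeff_homogeneousComponent (c : ℚ) (f : LaurentSeries k) (m : ℤ) :
    (homogeneousComponent c f).coeff m = if (m : ℚ) = c then f.coeff m else 0 :=
  rfl

theorem isHomogeneous_homogeneousComponent (c : ℚ) (f : LaurentSeries k) :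
    IsHomogeneous c (homogeneousComponent c f) := fun m hm => by
  by_contra h
  exact hm (by simp [h])

theorem homogeneousComponent_of_isHomogeneous {c : ℚ} {f : LaurentSeries k}
    (hf : IsHomogeneous c f) : homogeneousComponent c f = f := by
  ext m
  rw [coeff_homogeneousComponent, ite_eq_left_iff]
  exact fun h => (not_not.1 (mt (hf m) h)).symm

theorem IsHomogeneous.eq_single {a : ℚ} {g : LaurentSeries k} (hg : IsHomogeneous a g)
    {m₀ : ℤ} (hm₀ : (m₀ : ℚ) = a) : g = HahnSeries.single m₀ (g.coeff m₀) := by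
  ext m
  obtain rfl | hm := eq_or_ne m m₀
  · simp
  · rw [HahnSeries.coeff_single_of_ne hm]
    exact not_not.1 fun hne => hm (by exact_mod_cast (hg m hne).trans hm₀.symm)

theorem homogeneousComponent_add_mul {a : ℚ} {g : LaurentSeries k} (hg : IsHomogeneous a g)
    (c : ℚ) (h : LaurentSeries k) :
    homogeneousComponent (a + c) (g * h) = g * homogeneousComponent c h := by
  by_cases hg0 : g = 0
  · simp [hg0]
  obtain ⟨m₀, hm₀⟩ := HahnSeries.support_nonempty_iff.2 hg0
  have ha : (m₀ : ℚ) = a := hg m₀ hm₀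
  rw [hg.eq_single ha]
  ext m
  obtain ⟨m, rfl⟩ : ∃ m', m = m' + m₀ := ⟨m - m₀, by ring⟩
  simp only [coeff_homogeneousComponent, HahnSeries.coeff_single_mul_add, mul_ite, mul_zero]
  push_cast
  simp only [← ha, add_comm (m : ℚ), add_right_inj]

theorem homogeneousComponent_mul_add {a : ℚ} {g : LaurentSeries k} (hg : IsHomogeneous a g)
    (c : ℚ) (h : LaurentSeries k) :
    homogeneousComponent (c + a) (h * g) = homogeneousComponent c h * g := by
  rw [mul_comm, add_comm, homogeneousComponent_add_mul hg, mul_comm]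

end LaurentSeries

open LaurentSeries

section GradedComponent

variable {n : ℕ} {x : Fin n → ℚ}

theorem mem_Gr_iff {d : ℚ} {A : Matrix (Fin n) (Fin n) (LaurentSeries k)} :
    A ∈ Gr x d ↔ ∀ i j, IsHomogeneous (d - x i + x j) (A i j) :=
  forall₃_congr fun i j m => imp_congr_right fun _ => by constructor <;> intro <;> linarith

variable (x) in
def gradedComponent (d : ℚ) :
    Matrix (Fin n) (Fin n) (LaurentSeries k) →+ Matrix (Fin n) (Fin n) (LaurentSeries k) where
  toFun A := Matrix.of fun i j => homogeneousComponent (d - x i + x j) (A i j)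
  map_zero' := by ext1 i j; simp
  map_add' A B := by ext1 i j; simp

theorem gradedComponent_apply (d : ℚ) (A : Matrix (Fin n) (Fin n) (LaurentSeries k))
    (i j : Fin n) :
    gradedComponent x d A i j = homogeneousComponent (d - x i + x j) (A i j) :=
  rfl

theorem gradedComponent_mem (d : ℚ) (A : Matrix (Fin n) (Fin n) (LaurentSeries k)) :
    gradedComponent x d A ∈ Gr x d :=
  mem_Gr_iff.2 fun _ _ => isHomogeneous_homogeneousComponent _ _

theorem gradedComponent_of_mem {d : ℚ} {A : Matrix (Fin n) (Fin n) (LaurentSeries k)}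
    (hA : A ∈ Gr x d) : gradedComponent x d A = A :=
  Matrix.ext fun i j => homogeneousComponent_of_isHomogeneous (mem_Gr_iff.1 hA i j)

variable {a : ℚ} {X : Matrix (Fin n) (Fin n) (LaurentSeries k)}

theorem gradedComponent_mul_left (hX : X ∈ Gr x a) (d : ℚ)
    (M : Matrix (Fin n) (Fin n) (LaurentSeries k)) :
    gradedComponent x (a + d) (X * M) = X * gradedComponent x d M := by
  ext1 i j
  simp only [gradedComponent_apply, mul_apply, map_sum]
  refine Finset.sum_congr rfl fun l _ => ?_
  rw [show a + d - x i + x j = (a - x i + x l) + (d - x l + x j) by ring]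
  exact homogeneousComponent_add_mul (mem_Gr_iff.1 hX i l) _ _

theorem gradedComponent_mul_right (hX : X ∈ Gr x a) (d : ℚ)
    (M : Matrix (Fin n) (Fin n) (LaurentSeries k)) :
    gradedComponent x (d + a) (M * X) = gradedComponent x d M * X := by
  ext1 i j
  simp only [gradedComponent_apply, mul_apply, map_sum]
  refine Finset.sum_congr rfl fun l _ => ?_
  rw [show d + a - x i + x j = (d - x i + x l) + (a - x l + x j) by ring]
  exact homogeneousComponent_mul_add (mem_Gr_iff.1 hX l j) _ _

theorem gradedComponent_lie (hX : X ∈ Gr x a) (d : ℚ)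
    (M : Matrix (Fin n) (Fin n) (LaurentSeries k)) :
    gradedComponent x (a + d) ⁅X, M⁆ = ⁅X, gradedComponent x d M⁆ := by
  rw [Ring.lie_def, Ring.lie_def, map_sub, gradedComponent_mul_left hX, add_comm,
    gradedComponent_mul_right hX]

theorem Commute.gradedComponent {B : Matrix (Fin n) (Fin n) (LaurentSeries k)} (hX : X ∈ Gr x a)
    (hB : Commute B X) (d : ℚ) : Commute (gradedComponent x d B) X := by
  have h := gradedComponent_lie hX d B
  rw [commute_iff_lie_eq.1 hB.symm, map_zero] at h
  exact (commute_iff_lie_eq.2 h.symm).symm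

end GradedComponent

theorem stmt8_general {n : ℕ}
    (x : Fin n → ℚ) (r : ℚ)
    (X : Matrix (Fin n) (Fin n) (LaurentSeries k)) (hX : X ∈ Gr x (-r))
    -- the centralizer s = {A | [A,X] = 0} is a Cartan subalgebra: commutative ...
    (hcomm : ∀ a b : Matrix (Fin n) (Fin n) (LaurentSeries k),
      a * X = X * a → b * X = X * b → a * b = b * a)
    -- ... and self-normalizing
    (hnorm : ∀ A : Matrix (Fin n) (Fin n) (LaurentSeries k),
      (∀ b, b * X = X * b → (A * b - b * A) * X = X * (A * b - b * A)) → A * X = X * A) :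
    ∀ j : ℚ,
      -- [X, g_x(j)] ⊆ g_x(j−r)
      (∀ A ∈ Gr (k := k) x j, X * A - A * X ∈ Gr x (j - r)) ∧
      -- spanning
      (∀ Z ∈ Gr (k := k) x (j - r), ∃ A ∈ Gr (k := k) x j,
        ∃ B : Matrix (Fin n) (Fin n) (LaurentSeries k),
          B * X = X * B ∧ B ∈ Gr x (j - r) ∧ Z = (X * A - A * X) + B) ∧
      -- the sum is direct: trivial intersection
      (∀ C : Matrix (Fin n) (Fin n) (LaurentSeries k),
        (∃ A ∈ Gr (k := k) x j, C = X * A - A * X) →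
        C * X = X * C → C ∈ Gr x (j - r) → C = 0) ∧
      -- orthogonality with respect to the trace pairing
      (∀ A ∈ Gr (k := k) x j, ∀ B : Matrix (Fin n) (Fin n) (LaurentSeries k),
        B * X = X * B → B ∈ Gr x (j - r) → ((X * A - A * X) * B).trace = 0) := by
  intro j
  have hshift (M : Matrix (Fin n) (Fin n) (LaurentSeries k)) :
      gradedComponent x (j - r) ⁅X, M⁆ = ⁅X, gradedComponent x j M⁆ := by
    rw [sub_eq_neg_add]
    exact gradedComponent_lie hX j M
  have hker (A : Matrix (Fin n) (Fin n) (LaurentSeries k)) : Commute ⁅X, A⁆ X → Commute A X :=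
    commute_of_commute_lie hcomm hnorm
  simp only [← Ring.lie_def]
  refine ⟨fun A hA => ?_, fun Z hZ => ?_, ?_,
    fun A _ B hB _ => trace_lie_mul_eq_zero_of_commute A hB⟩
  · rw [← gradedComponent_of_mem hA, ← hshift]
    exact gradedComponent_mem _ _
  · obtain ⟨A, B, hB, rfl⟩ := exists_eq_lie_add_of_commute (K := LaurentSeries k) hker Z
    refine ⟨gradedComponent x j A, gradedComponent_mem j A, gradedComponent x (j - r) B,
      hB.gradedComponent hX _, gradedComponent_mem _ _, ?_⟩
    rw [← gradedComponent_of_mem hZ, map_add, hshift]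
  · rintro C ⟨A, -, rfl⟩ hC -
    exact commute_iff_lie_eq.1 (hker A hC).symm

/-- let `X ∈ g_x(−r)` (`r ≥ 0`) have centralizer `s` a Cartan subalgebra.
Then for every `j ∈ ℚ`, `g_x(j−r) = [X, g_x(j)] ⊕ (s ∩ g_x(j−r))`, and the two summands
are orthogonal for the trace pairing `(A,B) ↦ tr(AB)`. -/
theorem stmt8 [IsAlgClosed k] [CharZero k] {n : ℕ}
    (x : Fin n → ℚ) (r : ℚ) (hr : 0 ≤ r)
    (X : Matrix (Fin n) (Fin n) (LaurentSeries k)) (hX : X ∈ Gr x (-r))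
    -- the centralizer s = {A | [A,X] = 0} is a Cartan subalgebra: commutative ...
    (hcomm : ∀ a b : Matrix (Fin n) (Fin n) (LaurentSeries k),
      a * X = X * a → b * X = X * b → a * b = b * a)
    -- ... and self-normalizing
    (hnorm : ∀ A : Matrix (Fin n) (Fin n) (LaurentSeries k),
      (∀ b, b * X = X * b → (A * b - b * A) * X = X * (A * b - b * A)) → A * X = X * A) :
    ∀ j : ℚ,
      -- [X, g_x(j)] ⊆ g_x(j−r)
      (∀ A ∈ Gr (k := k) x j, X * A - A * X ∈ Gr x (j - r)) ∧
      -- spanning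
      (∀ Z ∈ Gr (k := k) x (j - r), ∃ A ∈ Gr (k := k) x j,
        ∃ B : Matrix (Fin n) (Fin n) (LaurentSeries k),
          B * X = X * B ∧ B ∈ Gr x (j - r) ∧ Z = (X * A - A * X) + B) ∧
      -- the sum is direct: trivial intersection
      (∀ C : Matrix (Fin n) (Fin n) (LaurentSeries k),
        (∃ A ∈ Gr (k := k) x j, C = X * A - A * X) →
        C * X = X * C → C ∈ Gr x (j - r) → C = 0) ∧
      -- orthogonality with respect to the trace pairing
      (∀ A ∈ Gr (k := k) x j, ∀ B : Matrix (Fin n) (Fin n) (LaurentSeries k),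
        B * X = X * B → B ∈ Gr x (j - r) → ((X * A - A * X) * B).trace = 0) :=
  stmt8_general x r X hX hcomm hnorm
end
end

section
/- Let r ≥ 1 be an integer and let D¹, D² be diagonal matrices with entries in z^{−r}·k[[z]] whose leading coefficients (the coefficients of z^{−r}) are equal and have pairwise distinct diagonal entries. If there exists p ∈ GL_n(k[[z]]) such that p·D¹·p^{-1} − τ(p)·p^{-1} − D² ∈ z·gl_n(k[[z]]), then D¹ − D² ∈ z·gl_n(k[[z]]), i.e. D¹ and D² agree in all degrees ≤ 0. -/
noncomputable section

open Polynomial Matrix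

variable {k : Type*} [Field k]

/-!
Membership in `z^d·k[[z]]` is expressed throughout as `d ≤ orderTop`.

Multiplying the gauge relation on the right by `p` gives `p D¹ - D² p ≡ τ(p) ≡ 0` modulo
`z·gl_n(k[[z]])`, as `τ` kills constants; entrywise, `p_ij (D¹_jj - D²_ii) ∈ z·k[[z]]`.
For `i ≠ j` the second factor has nonzero `z^{-r}` coefficient, hence order `≤ 0`, so
`p_ij ∈ z·k[[z]]`. Thus `p(0)` is diagonal, and since `det p(0) = (det p)(0) ≠ 0` every `p_ii`
is a unit of `k[[z]]`, which forces `D¹_ii - D²_ii ∈ z·k[[z]]`.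
-/

namespace HahnSeries

variable {Γ R : Type*} [LinearOrder Γ]

theorem orderTop_mul_le_left [AddCommMonoid Γ] [IsOrderedCancelAddMonoid Γ] [Semiring R]
    [NoZeroDivisors R] (x : HahnSeries Γ R) {y : HahnSeries Γ R} (hy : y.orderTop ≤ 0) :
    (x * y).orderTop ≤ x.orderTop := by
  simpa [orderTop_mul] using add_le_add_right hy x.orderTop

theorem le_orderTop_sum {ι : Type*} [AddCommMonoid R] (s : Finset ι) (f : ι → HahnSeries Γ R)
    {a : WithTop Γ} (hf : ∀ i ∈ s, a ≤ (f i).orderTop) : a ≤ (∑ i ∈ s, f i).orderTop := by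
  refine le_orderTop_iff_forall.2 fun j hj => ?_
  rw [coeff_sum]
  exact Finset.sum_eq_zero fun i hi => coeff_eq_zero_of_lt_orderTop (hj.trans_le (hf i hi))

end HahnSeries

open HahnSeries

namespace Matrix

theorem add_le_orderTop_mul_apply {ι Γ R : Type*} [Fintype ι] [AddCommMonoid Γ] [LinearOrder Γ]
    [IsOrderedCancelAddMonoid Γ] [Semiring R] {A B : Matrix ι ι (HahnSeries Γ R)} {a b : WithTop Γ}
    (hA : ∀ i j, a ≤ (A i j).orderTop) (hB : ∀ i j, b ≤ (B i j).orderTop) (i j : ι) :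
    a + b ≤ ((A * B) i j).orderTop :=
  le_orderTop_sum _ _ fun l _ => (add_le_add (hA i l) (hB l j)).trans orderTop_add_le_mul

theorem mul_diagonal_sub_diagonal_mul_apply {ι R : Type*} [Fintype ι] [DecidableEq ι]
    [CommRing R] (A : Matrix ι ι R) (d e : ι → R) (i j : ι) :
    (A * diagonal d - diagonal e * A) i j = A i j * (d j - e i) := by
  simp [mul_sub, mul_comm]

end Matrix

namespace LaurentSeries

variable {R : Type*}

theorem one_le_orderTop_iff [Zero R] {f : LaurentSeries R} :
    1 ≤ f.orderTop ↔ ∀ m : ℤ, m ≤ 0 → f.coeff m = 0 := by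
  rw [le_orderTop_iff_forall]
  refine forall_congr' fun m => imp_congr_left ?_
  exact_mod_cast Int.lt_add_one_iff (b := 0)

theorem orderTop_nonneg_iff [Zero R] {f : LaurentSeries R} :
    0 ≤ f.orderTop ↔ ∀ m : ℤ, m < 0 → f.coeff m = 0 := by
  rw [le_orderTop_iff_forall]
  exact forall_congr' fun m => imp_congr_left (by exact_mod_cast Iff.rfl)

theorem orderTop_nonpos_of_coeff_ne_zero [Zero R] {f : LaurentSeries R} {m : ℤ} (hm : m ≤ 0)
    (h : f.coeff m ≠ 0) : f.orderTop ≤ 0 :=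
  (orderTop_le_of_coeff_ne_zero h).trans (WithTop.coe_le_coe.2 hm)

theorem exists_ofPowerSeries_eq [Semiring R] {f : LaurentSeries R} (hf : 0 ≤ f.orderTop) :
    ∃ F : PowerSeries R, ofPowerSeries ℤ R F = f := by
  refine ⟨PowerSeries.mk fun m => f.coeff m, ?_⟩
  ext m
  rw [PowerSeries.coeff_coe]
  split_ifs with hm
  · exact (orderTop_nonneg_iff.1 hf m hm).symm
  · simp [Int.natAbs_of_nonneg (not_lt.1 hm)]

theorem coeff_zero_det {ι : Type*} [Fintype ι] [DecidableEq ι] [CommRing R]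
    (A : Matrix ι ι (LaurentSeries R)) (hA : ∀ i j, 0 ≤ (A i j).orderTop) :
    A.det.coeff 0 = (A.map (coeff · 0)).det := by
  choose F hF using fun i j => exists_ofPowerSeries_eq (hA i j)
  obtain rfl : (Matrix.of F).map (ofPowerSeries ℤ R) = A := by ext1 i j; exact hF i j
  have hcoeff (G : PowerSeries R) :
      (ofPowerSeries ℤ R G).coeff 0 = PowerSeries.constantCoeff G := by
    simpa using PowerSeries.coeff_coe G 0
  have hdet := (ofPowerSeries ℤ R).map_det (Matrix.of F)
  rw [RingHom.mapMatrix_apply] at hdet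
  rw [← hdet, hcoeff, Matrix.map_map, Function.comp_def]
  simp only [hcoeff]
  exact (PowerSeries.constantCoeff (R := R)).map_det _

end LaurentSeries

open LaurentSeries

theorem one_le_orderTop_tauF {f : LaurentSeries k} (hf : 0 ≤ f.orderTop) :
    1 ≤ (tauF f).orderTop := by
  refine one_le_orderTop_iff.2 fun m hm => ?_
  change (m : k) * f.coeff m = 0
  rcases hm.lt_or_eq with hm | rfl
  · rw [orderTop_nonneg_iff.1 hf m hm, mul_zero]
  · simp

theorem one_le_orderTop_mul_sub_of_gauge {ι : Type*} [Fintype ι] [DecidableEq ι]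
    {D₁ D₂ p : Matrix ι ι (LaurentSeries k)} (hD₁ : D₁.IsDiag) (hD₂ : D₂.IsDiag)
    (hp : ∀ i j, 0 ≤ (p i j).orderTop) (hdet : p.det ≠ 0)
    (hgauge : ∀ i j, 1 ≤ ((p * D₁ * p⁻¹ - p.map tauF * p⁻¹ - D₂) i j).orderTop) (i j : ι) :
    1 ≤ (p i j * (D₁ j j - D₂ i i)).orderTop := by
  have hexpand : (p * D₁ * p⁻¹ - p.map tauF * p⁻¹ - D₂) * p + p.map tauF
      = p * diagonal D₁.diag - diagonal D₂.diag * p := by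
    rw [hD₁.diagonal_diag, hD₂.diagonal_diag, sub_mul, sub_mul, Matrix.mul_assoc (p * D₁),
      Matrix.mul_assoc (p.map tauF), nonsing_inv_mul _ (isUnit_iff_ne_zero.2 hdet),
      Matrix.mul_one, Matrix.mul_one]
    abel
  have hXp : 1 ≤ (((p * D₁ * p⁻¹ - p.map tauF * p⁻¹ - D₂) * p) i j).orderTop := by
    simpa using add_le_orderTop_mul_apply hgauge hp i j
  rw [← diag_apply D₁, ← diag_apply D₂, ← mul_diagonal_sub_diagonal_mul_apply, ← hexpand]
  exact (le_min hXp (one_le_orderTop_tauF (hp i j))).trans min_orderTop_le_orderTop_add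

theorem stmt12_general {n : ℕ} (r : ℕ)
    (D₁ D₂ : Matrix (Fin n) (Fin n) (LaurentSeries k))
    (hdiag1 : ∀ i j, i ≠ j → D₁ i j = 0)
    (hdiag2 : ∀ i j, i ≠ j → D₂ i j = 0)
    (hlead : ∀ i, (D₁ i i).coeff (-(r : ℤ)) = (D₂ i i).coeff (-(r : ℤ)))
    (hdist : ∀ i j, i ≠ j → (D₁ i i).coeff (-(r : ℤ)) ≠ (D₁ j j).coeff (-(r : ℤ)))
    (p : Matrix (Fin n) (Fin n) (LaurentSeries k))
    -- p ∈ GL_n(k[[z]]): entries in k[[z]] and determinant a unit of k[[z]]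
    (hpint : ∀ i j, ∀ m : ℤ, m < 0 → (p i j).coeff m = 0)
    (hpunit : (p.det).coeff 0 ≠ 0)
    (hgauge : ∀ i j, ∀ m : ℤ, m ≤ 0 →
      ((p * D₁ * p⁻¹ - (p.map tauF) * p⁻¹ - D₂) i j).coeff m = 0) :
    ∀ i j, ∀ m : ℤ, m ≤ 0 → ((D₁ - D₂) i j).coeff m = 0 := by
  have hp i j : 0 ≤ (p i j).orderTop := orderTop_nonneg_iff.2 (hpint i j)
  have hgauge_p := one_le_orderTop_mul_sub_of_gauge hdiag1 hdiag2 hp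
    (fun h => hpunit (by rw [h, HahnSeries.coeff_zero]))
    fun i j => one_le_orderTop_iff.2 (hgauge i j)
  have hoff i j (hij : i ≠ j) : (p i j).coeff 0 = 0 := by
    have hlead_ne : (D₁ j j - D₂ i i).coeff (-r) ≠ 0 := by
      rw [HahnSeries.coeff_sub, ← hlead i]
      exact sub_ne_zero.2 (hdist j i hij.symm)
    have h := (hgauge_p i j).trans (orderTop_mul_le_left _
      (orderTop_nonpos_of_coeff_ne_zero (by omega) hlead_ne))
    exact one_le_orderTop_iff.1 h 0 le_rfl
  have hunit i : (p i i).coeff 0 ≠ 0 := by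
    have hred : (p.map (coeff · 0)).IsDiag := hoff
    rw [coeff_zero_det p hp, ← hred.diagonal_diag, det_diagonal] at hpunit
    exact Finset.prod_ne_zero_iff.1 hpunit i (Finset.mem_univ i)
  intro i j
  rcases eq_or_ne i j with rfl | hij
  · have h := hgauge_p i i
    rw [mul_comm] at h
    exact one_le_orderTop_iff.1 (h.trans
      (orderTop_mul_le_left _ (orderTop_nonpos_of_coeff_ne_zero le_rfl (hunit i))))
  · simp [hdiag1 i j hij, hdiag2 i j hij]

/-- let `D¹, D²` be diagonal with entries in `z^{−r}·k[[z]]`, with equal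
leading coefficients having pairwise distinct diagonal entries.  If some `p ∈ GL_n(k[[z]])`
satisfies `p·D¹·p⁻¹ − τ(p)·p⁻¹ − D² ∈ z·gl_n(k[[z]])`, then `D¹ − D² ∈ z·gl_n(k[[z]])`,
i.e. `D¹` and `D²` agree in all degrees `≤ 0`. -/
theorem stmt12 [IsAlgClosed k] [CharZero k] {n : ℕ} (r : ℕ) (hr : 1 ≤ r)
    (D₁ D₂ : Matrix (Fin n) (Fin n) (LaurentSeries k))
    (hdiag1 : ∀ i j, i ≠ j → D₁ i j = 0)
    (hdiag2 : ∀ i j, i ≠ j → D₂ i j = 0)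
    (hord1 : ∀ i, ∀ m : ℤ, m < -(r : ℤ) → (D₁ i i).coeff m = 0)
    (hord2 : ∀ i, ∀ m : ℤ, m < -(r : ℤ) → (D₂ i i).coeff m = 0)
    (hlead : ∀ i, (D₁ i i).coeff (-(r : ℤ)) = (D₂ i i).coeff (-(r : ℤ)))
    (hdist : ∀ i j, i ≠ j → (D₁ i i).coeff (-(r : ℤ)) ≠ (D₁ j j).coeff (-(r : ℤ)))
    (p : Matrix (Fin n) (Fin n) (LaurentSeries k))
    -- p ∈ GL_n(k[[z]]): entries in k[[z]] and determinant a unit of k[[z]]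
    (hpint : ∀ i j, ∀ m : ℤ, m < 0 → (p i j).coeff m = 0)
    (hpunit : (p.det).coeff 0 ≠ 0)
    (hgauge : ∀ i j, ∀ m : ℤ, m ≤ 0 →
      ((p * D₁ * p⁻¹ - (p.map tauF) * p⁻¹ - D₂) i j).coeff m = 0) :
    ∀ i j, ∀ m : ℤ, m ≤ 0 → ((D₁ - D₂) i j).coeff m = 0 :=
  stmt12_general r D₁ D₂ hdiag1 hdiag2 hlead hdist p hpint hpunit hgauge
end
end

section
/- Let A ∈ gl_n(k[[z]]) and suppose its constant term Λ := A(0) is a diagonal matrix diag(λ_1,…,λ_n) with λ_i − λ_j ∉ ℤ for all i ≠ j. Then there exists p ∈ GL_n(k[[z]]) with p ≡ I_n (mod z) such that p·A·p^{-1} − τ(p)·p^{-1} = Λ. -/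
/-! Writing `p = ∑ Pₘ zᵐ` and `A = ∑ Cₘ zᵐ` with `C₀ = Λ`, the gauge equation
`p A = Λ p + τ(p)` says `∑_{l+r=m} P_l C_r = (Λ + m) Pₘ` for every `m`. Taking `P₀ = 1`, the
equation of degree `m` involves `Pₘ` only through `(λᵢ - λⱼ + m) (Pₘ)ᵢⱼ`, so non-resonance
(`λᵢ - λⱼ + m ≠ 0` for `m > 0`) determines `Pₘ` from `P₀, …, P_{m-1}`; and `p` is invertible
because `P₀ = 1`. All of this happens in `k⟦z⟧`, where `τ` is `z · d/dz`, and is then pushed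
into `k⸨z⸩`. -/

noncomputable section

open Polynomial Matrix

variable {k : Type*} [Field k]

open scoped PowerSeries LaurentSeries
open HahnSeries (ofPowerSeries)
open Finset.HasAntidiagonal (antidiagonal)

theorem PowerSeries.coeff_X_mul_derivative {R : Type*} [CommSemiring R] (f : R⟦X⟧) (m : ℕ) :
    coeff m (X * derivative R f) = m * coeff m f := by
  cases m with
  | zero => simp
  | succ m => rw [coeff_succ_X_mul, coeff_derivative, mul_comm, Nat.cast_succ]

theorem LaurentSeries.exists_coe_eq_of_coeff_neg {R : Type*} [Semiring R] {f : R⸨X⸩}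
    (hf : ∀ m : ℤ, m < 0 → f.coeff m = 0) : ∃ F : R⟦X⟧, (F : R⸨X⸩) = f := by
  refine ⟨PowerSeries.mk fun n => f.coeff n, ?_⟩
  ext m
  rw [PowerSeries.coeff_coe]
  split_ifs with hm
  · exact (hf m hm).symm
  · rw [PowerSeries.coeff_mk, Int.natAbs_of_nonneg (not_lt.mp hm)]

theorem tauF_coe (f : k⟦X⟧) :
    tauF (f : k⸨X⸩) = ((PowerSeries.X * PowerSeries.derivative k f : k⟦X⟧) : k⸨X⸩) := by
  ext m
  change (m : k) * _ = _
  rw [PowerSeries.coeff_coe, PowerSeries.coeff_coe]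
  split_ifs with hm
  · rw [mul_zero]
  · rw [PowerSeries.coeff_X_mul_derivative, Nat.cast_natAbs, abs_of_nonneg (not_lt.mp hm)]

namespace Matrix

variable {R : Type*} [CommRing R] {ι : Type*}

theorem map_coeff_mul [Fintype ι] (M N : Matrix ι ι R⟦X⟧) (m : ℕ) :
    (M * N).map (PowerSeries.coeff m) =
      ∑ x ∈ antidiagonal m, M.map (PowerSeries.coeff x.1) * N.map (PowerSeries.coeff x.2) := by
  ext i j
  simp only [map_apply, mul_apply, map_sum, PowerSeries.coeff_mul, sum_apply]
  exact Finset.sum_comm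

theorem isUnit_det_map_ofPowerSeries [Fintype ι] [DecidableEq ι] {P : Matrix ι ι R⟦X⟧}
    (hP : IsUnit (P.map PowerSeries.constantCoeff).det) :
    IsUnit (P.map (ofPowerSeries ℤ R)).det := by
  rw [← RingHom.mapMatrix_apply, ← RingHom.map_det]
  refine IsUnit.map _ ?_
  rwa [PowerSeries.isUnit_iff_constantCoeff, RingHom.map_det]

theorem coeff_map_ofPowerSeries_sub_one_of_nonpos [DecidableEq ι] {P : Matrix ι ι R⟦X⟧}
    (hP : P.map PowerSeries.constantCoeff = 1) (i j : ι) {m : ℤ} (hm : m ≤ 0) :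
    ((P.map (ofPowerSeries ℤ R) - 1) i j).coeff m = 0 := by
  rw [← Matrix.map_one _ (map_zero (ofPowerSeries ℤ R)) (map_one _), ← Matrix.map_sub _ (map_sub _),
    map_apply, PowerSeries.coeff_coe]
  split_ifs with hneg
  · rfl
  · have hP1 : (P - 1).map PowerSeries.constantCoeff = 0 := by
      rw [Matrix.map_sub _ (map_sub _), hP, Matrix.map_one _ (map_zero _) (map_one _), sub_self]
    rw [le_antisymm hm (not_lt.mp hneg), Int.natAbs_zero, PowerSeries.coeff_zero_eq_constantCoeff]
    exact congrFun₂ hP1 i j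

theorem mul_mul_nonsing_inv_sub_eq [Fintype ι] [DecidableEq ι] {p A D T : Matrix ι ι R}
    (hp : IsUnit p.det) (h : p * A = D * p + T) : p * A * p⁻¹ - T * p⁻¹ = D := by
  rw [h, add_mul, add_sub_cancel_right, Matrix.mul_assoc, mul_nonsing_inv _ hp, Matrix.mul_one]

end Matrix

def NonResonant {ι : Type*} (lam : ι → k) : Prop :=
  ∀ i j, ∀ m : ℕ, 0 < m → lam i - lam j + m ≠ 0

theorem nonResonant_of_sub_ne_intCast [CharZero k] {ι : Type*} {lam : ι → k}
    (h : ∀ i j, i ≠ j → ∀ m : ℤ, lam i - lam j ≠ m) : NonResonant lam := by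
  intro i j m hm
  rcases eq_or_ne i j with rfl | hij
  · simpa using hm.ne'
  · exact fun hsum => h i j hij (-m) (by push_cast; exact eq_neg_of_add_eq_zero_left hsum)

section Gauge

variable {ι : Type*} [Fintype ι] [DecidableEq ι]

def gaugeCoeff (lam : ι → k) (C : ℕ → Matrix ι ι k) : ℕ → Matrix ι ι k
  | 0 => 1
  | m + 1 => of fun i j =>
      (∑ x ∈ (antidiagonal m).attach, gaugeCoeff lam C x.1.1 * C (x.1.2 + 1)) i j /
        (lam i - lam j + (m + 1 : ℕ))
  decreasing_by have := Finset.HasAntidiagonal.mem_antidiagonal.mp x.2; omega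

variable (lam : ι → k) (C : ℕ → Matrix ι ι k)

theorem gaugeCoeff_zero : gaugeCoeff lam C 0 = 1 := by
  rw [gaugeCoeff]

theorem gaugeCoeff_succ_apply (m : ℕ) (i j : ι) :
    gaugeCoeff lam C (m + 1) i j =
      (∑ x ∈ antidiagonal m, gaugeCoeff lam C x.1 * C (x.2 + 1)) i j /
        (lam i - lam j + (m + 1 : ℕ)) := by
  rw [gaugeCoeff, of_apply, Finset.sum_attach (antidiagonal m)
    (fun x => gaugeCoeff lam C x.1 * C (x.2 + 1))]

theorem sum_antidiagonal_gaugeCoeff_mul (hC0 : C 0 = diagonal lam)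
    (hnr : NonResonant lam) (m : ℕ) :
    ∑ x ∈ antidiagonal m, gaugeCoeff lam C x.1 * C x.2 =
      diagonal (fun i => lam i + m) * gaugeCoeff lam C m := by
  cases m with
  | zero => simp [gaugeCoeff_zero, hC0]
  | succ m =>
    rw [Finset.Nat.sum_antidiagonal_succ']
    ext i j
    have hS := div_mul_cancel₀
      ((∑ x ∈ antidiagonal m, gaugeCoeff lam C x.1 * C (x.2 + 1)) i j) (hnr i j _ m.succ_pos)
    rw [← gaugeCoeff_succ_apply] at hS
    rw [Matrix.add_apply, hC0, mul_diagonal, diagonal_mul, ← hS]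
    ring

theorem exists_gauge_diagonal_powerSeries (B : Matrix ι ι k⟦X⟧) (lam : ι → k)
    (hB0 : B.map PowerSeries.constantCoeff = diagonal lam)
    (hnr : NonResonant lam) :
    ∃ P : Matrix ι ι k⟦X⟧, P.map PowerSeries.constantCoeff = 1 ∧
      P * B = diagonal (fun i => PowerSeries.C (lam i)) * P +
        P.map (fun f => PowerSeries.X * PowerSeries.derivative k f) := by
  set C : ℕ → Matrix ι ι k := fun m => B.map (PowerSeries.coeff m)
  have hC0 : C 0 = diagonal lam := by
    simpa only [C, PowerSeries.coeff_zero_eq_constantCoeff] using hB0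
  set P : Matrix ι ι k⟦X⟧ := of fun i j => PowerSeries.mk fun m => gaugeCoeff lam C m i j
  have hP : ∀ m, P.map (PowerSeries.coeff m) = gaugeCoeff lam C m := fun m => by
    ext i j; simp [P]
  refine ⟨P, by rw [← PowerSeries.coeff_zero_eq_constantCoeff, hP, gaugeCoeff_zero], ?_⟩
  suffices ∀ m, (P * B).map (PowerSeries.coeff m) = (diagonal (fun i => PowerSeries.C (lam i)) * P +
      P.map (fun f => PowerSeries.X * PowerSeries.derivative k f)).map (PowerSeries.coeff m) by
    ext i j m; exact congrFun₂ (this m) i j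
  intro m
  simp_rw [map_coeff_mul, hP]
  rw [sum_antidiagonal_gaugeCoeff_mul lam C hC0 hnr]
  ext i j
  simp [diagonal_mul, PowerSeries.coeff_X_mul_derivative, ← hP m, add_mul]

theorem exists_gauge_diagonal (A : Matrix ι ι k⸨X⸩)
    (hA : ∀ i j, ∀ m : ℤ, m < 0 → (A i j).coeff m = 0)
    (hA0 : ∀ i j, i ≠ j → (A i j).coeff 0 = 0)
    (hnr : NonResonant fun i => (A i i).coeff 0) :
    ∃ P : Matrix ι ι k⟦X⟧, P.map PowerSeries.constantCoeff = 1 ∧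
      P.map (ofPowerSeries ℤ k) * A =
        diagonal (fun i => HahnSeries.C ((A i i).coeff 0)) * P.map (ofPowerSeries ℤ k) +
          (P.map (ofPowerSeries ℤ k)).map tauF := by
  choose B hB using fun i j => LaurentSeries.exists_coe_eq_of_coeff_neg (hA i j)
  obtain rfl : (of B).map (ofPowerSeries ℤ k) = A := ext hB
  have hcoeff0 : ∀ i j, ((of B).map (ofPowerSeries ℤ k) i j).coeff 0 =
      PowerSeries.constantCoeff (B i j) := fun i j => by
    simpa using LaurentSeries.coeff_coe_powerSeries (B i j) 0
  simp only [hcoeff0] at hA0 hnr ⊢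
  have hB0 : (of B).map PowerSeries.constantCoeff =
      diagonal fun i => PowerSeries.constantCoeff (B i i) := by
    ext i j
    rcases eq_or_ne i j with rfl | hij
    · simp
    · simp [hA0 i j hij, hij]
  obtain ⟨P, hP1, hPB⟩ := exists_gauge_diagonal_powerSeries (of B) _ hB0 hnr
  refine ⟨P, hP1, ?_⟩
  rw [← Matrix.map_mul, hPB, Matrix.map_add _ (map_add _), Matrix.map_mul,
    diagonal_map (map_zero _), Matrix.map_map, Matrix.map_map]
  simp [Function.comp_def, tauF_coe]

end Gauge

theorem stmt13_general [CharZero k] {n : ℕ}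
    (A : Matrix (Fin n) (Fin n) (LaurentSeries k))
    (hA : ∀ i j, ∀ m : ℤ, m < 0 → (A i j).coeff m = 0)
    (hdiag : ∀ i j, i ≠ j → (A i j).coeff 0 = 0)
    (hres : ∀ i j, i ≠ j → ∀ mz : ℤ, (A i i).coeff 0 - (A j j).coeff 0 ≠ (mz : k)) :
    ∃ p : Matrix (Fin n) (Fin n) (LaurentSeries k),
      IsUnit p.det ∧
      (∀ i j, ∀ m : ℤ, m ≤ 0 → ((p - 1) i j).coeff m = 0) ∧
      p * A * p⁻¹ - (p.map tauF) * p⁻¹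
        = Matrix.diagonal (fun i => (HahnSeries.C ((A i i).coeff 0) : LaurentSeries k)) := by
  obtain ⟨P, hP1, hPA⟩ := exists_gauge_diagonal A hA hdiag (nonResonant_of_sub_ne_intCast hres)
  have hdet : IsUnit (P.map (ofPowerSeries ℤ k)).det :=
    isUnit_det_map_ofPowerSeries (by simp [hP1])
  exact ⟨P.map (ofPowerSeries ℤ k), hdet, coeff_map_ofPowerSeries_sub_one_of_nonpos hP1,
    mul_mul_nonsing_inv_sub_eq hdet hPA⟩

/-- if `A ∈ gl_n(k[[z]])` has constant term `Λ = diag(λ₁,…,λₙ)` with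
`λᵢ − λⱼ ∉ ℤ` for `i ≠ j`, then there is `p ∈ GL_n(k[[z]])` with `p ≡ Iₙ (mod z)`
such that `p·A·p⁻¹ − τ(p)·p⁻¹ = Λ`. -/
theorem stmt13 [IsAlgClosed k] [CharZero k] {n : ℕ}
    (A : Matrix (Fin n) (Fin n) (LaurentSeries k))
    (hA : ∀ i j, ∀ m : ℤ, m < 0 → (A i j).coeff m = 0)
    (hdiag : ∀ i j, i ≠ j → (A i j).coeff 0 = 0)
    (hres : ∀ i j, i ≠ j → ∀ mz : ℤ, (A i i).coeff 0 - (A j j).coeff 0 ≠ (mz : k)) :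
    ∃ p : Matrix (Fin n) (Fin n) (LaurentSeries k),
      IsUnit p.det ∧
      (∀ i j, ∀ m : ℤ, m ≤ 0 → ((p - 1) i j).coeff m = 0) ∧
      p * A * p⁻¹ - (p.map tauF) * p⁻¹
        = Matrix.diagonal (fun i => (HahnSeries.C ((A i i).coeff 0) : LaurentSeries k)) :=
  stmt13_general A hA hdiag hres
end
end
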